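/- Fix ε̃ ∈ (0,1]. Given a RochetNet menu M = {(x^(k), p^(k))}_{k∈{0,...,K}}, define M̃ by x̃^(k)_j = ε̃ ⌊x^(k)_j / ε̃⌋ and p̃^(k) = (1 − √ε̃) p^(k). Then for every λ ∈ [0,1], the convex combination M' = λ M + (1−λ) M̃ satisfies Rev(M') ≥ Rev(M) − 2√ε̃. -/

import Mathlib

open MeasureTheory Finset

namespace RN

/-- A RochetNet menu: for each of the `K+1` option indices, an allocation in `[0,1]^n`
and a price. -/
abbrev Menu (n K : ℕ) := Fin (K + 1) → (Fin n → ℝ) × ℝ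

/-- Inner product of a valuation and an allocation. -/
def dotp {n : ℕ} (v x : Fin n → ℝ) : ℝ := ∑ j, v j * x j

/-- A valid menu: allocations in `[0,1]^n`, nonnegative prices, default option `(0,0)`. -/
def IsMenu {n K : ℕ} (M : Menu n K) : Prop :=
  (∀ k j, 0 ≤ (M k).1 j ∧ (M k).1 j ≤ 1) ∧ (∀ k, 0 ≤ (M k).2) ∧ M 0 = 0

/-- Utility of option `k` for valuation `v`. -/
def util {n K : ℕ} (M : Menu n K) (v : Fin n → ℝ) (k : Fin (K + 1)) : ℝ :=
  dotp v (M k).1 - (M k).2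

/-- Price extracted at valuation `v`: the maximal price among utility-maximizing options. -/
noncomputable def price {n K : ℕ} (M : Menu n K) (v : Fin n → ℝ) : ℝ :=
  sSup {p : ℝ | ∃ k, (∀ k', util M v k' ≤ util M v k) ∧ p = (M k).2}

/-- Option `k` is the buyer's selected option at `v`: it maximizes utility and, among
utility maximizers, has maximal price. -/
def Selected {n K : ℕ} (M : Menu n K) (v : Fin n → ℝ) (k : Fin (K + 1)) : Prop :=
  (∀ k', util M v k' ≤ util M v k) ∧ (M k).2 = price M v

/-- The set of valuations. -/
def V (n : ℕ) : Set (Fin n → ℝ) :=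
  {v | (∀ j, 0 ≤ v j ∧ v j ≤ 1) ∧ ∑ j, v j ≤ 1}

/-- Expected revenue of menu `M` under valuation distribution `F`. -/
noncomputable def Rev {n K : ℕ} (F : Measure (Fin n → ℝ)) (M : Menu n K) : ℝ :=
  ∫ v, price M v ∂F

/-- Option-wise convex combination `lam • M + (1 - lam) • M'` of two menus. -/
noncomputable def comb {n K : ℕ} (lam : ℝ) (M M' : Menu n K) : Menu n K :=
  fun k => (fun j => lam * (M k).1 j + (1 - lam) * (M' k).1 j,
            lam * (M k).2 + (1 - lam) * (M' k).2)

/-- `M` is `ε`-reducible: some subset `K'` of options containing the default option, of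
cardinality at most `√(K+1)`, contains the buyer's selected option with probability
at least `1 - ε`. -/
def Reducible {n K : ℕ} (F : Measure (Fin n → ℝ)) (M : Menu n K) (ε : ℝ) : Prop :=
  ∃ K' : Finset (Fin (K + 1)), 0 ∈ K' ∧ (K'.card : ℝ) ≤ Real.sqrt (K + 1) ∧
    (F {v | ∃ k ∈ K', Selected M v k}).toReal ≥ 1 - ε

/-- `M₁` and `M₂` are `ε`-mode-connected by a piecewise linear path with `pieces` linear
pieces, all whose menus are valid and have revenue at least `min (Rev M₁) (Rev M₂) - ε`. -/
def PLConnected {n K : ℕ} (F : Measure (Fin n → ℝ)) (M₁ M₂ : Menu n K) (ε : ℝ)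
    (pieces : ℕ) : Prop :=
  ∃ P : Fin (pieces + 1) → Menu n K, P 0 = M₁ ∧ P (Fin.last pieces) = M₂ ∧
    (∀ i, IsMenu (P i)) ∧
    ∀ i : Fin pieces, ∀ lam ∈ Set.Icc (0 : ℝ) 1,
      Rev F (comb lam (P i.castSucc) (P i.succ)) ≥ min (Rev F M₁) (Rev F M₂) - ε

/-- The discretized menu: each allocation coordinate is rounded down to a multiple of
`εt` and each price is rescaled by `1 - √εt`. -/
noncomputable def discretize {n K : ℕ} (εt : ℝ) (M : Menu n K) : Menu n K :=
  fun k => (fun j => εt * (⌊(M k).1 j / εt⌋₊ : ℝ), (1 - Real.sqrt εt) * (M k).2)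

/-!
Write `s = √εt` and `α = (1 - lam) s`. In the combined menu every price is scaled by `1 - α`,
and rounding lowers each allocation coordinate by at most `(1 - lam) εt = α s`, so for `v ∈ V`
the utility of option `k` moves from `u_k` to somewhere in `[u_k + α p_k - α s, u_k + α p_k]`.
Comparing the buyer's choice `k₀` in `M` with a utility maximizer `k₁` of the new menu gives
`α p_{k₁} ≥ α (p_{k₀} - s)`, so the new price is at least `(1 - α)(p_{k₀} - s) ≥ p_{k₀} - 2s`,
using `p_{k₀} ≤ 1` (individual rationality on `V`). Integrating over `V` gives the theorem.
-/

section Price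

variable {n K : ℕ} (M : Menu n K) (v : Fin n → ℝ)

lemma finite_optimal_prices :
    {p : ℝ | ∃ k, (∀ k', util M v k' ≤ util M v k) ∧ p = (M k).2}.Finite :=
  (Set.finite_range fun k => (M k).2).subset (by rintro p ⟨k, _, rfl⟩; exact ⟨k, rfl⟩)

lemma exists_selected : ∃ k, Selected M v k := by
  obtain ⟨k, hk⟩ := Finite.exists_max (util M v)
  have hne : {p : ℝ | ∃ k, (∀ k', util M v k' ≤ util M v k) ∧ p = (M k).2}.Nonempty :=
    ⟨_, k, hk, rfl⟩
  obtain ⟨k, hk, hp⟩ := hne.csSup_mem (finite_optimal_prices M v)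
  exact ⟨k, hk, hp.symm⟩

lemma le_price {k : Fin (K + 1)} (hk : ∀ k', util M v k' ≤ util M v k) : (M k).2 ≤ price M v :=
  le_csSup (finite_optimal_prices M v).bddAbove ⟨k, hk, rfl⟩

lemma price_nonneg (hp : ∀ k, 0 ≤ (M k).2) : 0 ≤ price M v := by
  obtain ⟨k, -, hk⟩ := exists_selected M v
  exact hk ▸ hp k

lemma price_le_sum (hp : ∀ k, 0 ≤ (M k).2) : price M v ≤ ∑ k, (M k).2 := by
  obtain ⟨k, -, hk⟩ := exists_selected M v
  exact hk ▸ Finset.single_le_sum (fun k _ => hp k) (Finset.mem_univ k)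

lemma dotp_le_dotp {x y : Fin n → ℝ} (hv : ∀ j, 0 ≤ v j) (hxy : ∀ j, x j ≤ y j) :
    dotp v x ≤ dotp v y :=
  Finset.sum_le_sum fun j _ => mul_le_mul_of_nonneg_left (hxy j) (hv j)

lemma dotp_sub_le_dotp {x y : Fin n → ℝ} {c : ℝ} (hv : v ∈ V n) (hc : 0 ≤ c)
    (hxy : ∀ j, x j - c ≤ y j) : dotp v x - c ≤ dotp v y :=
  calc dotp v x - c ≤ dotp v x - c * ∑ j, v j := by nlinarith [hv.2]
    _ = dotp v (fun j => x j - c) := by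
      simp only [dotp, Finset.mul_sum, ← Finset.sum_sub_distrib]
      exact Finset.sum_congr rfl fun j _ => by ring
    _ ≤ dotp v y := dotp_le_dotp v (fun j => (hv.1 j).1) hxy

/-- Individual rationality: the default option `(0, 0)` caps every price paid on `V` by `1`. -/
lemma price_le_one (hM : IsMenu M) (hv : v ∈ V n) : price M v ≤ 1 := by
  obtain ⟨k, hk, hpk⟩ := exists_selected M v
  have hIR : 0 ≤ util M v k := by
    simpa [util, dotp, hM.2.2] using hk 0
  have hdotp : dotp v (M k).1 ≤ ∑ j, v j := by
    simpa [dotp] using dotp_le_dotp v (fun j => (hv.1 j).1) (fun j => (hM.1 k j).2)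
  rw [← hpk]
  linarith [hv.2, show util M v k = dotp v (M k).1 - (M k).2 from rfl]

lemma measurable_util (k : Fin (K + 1)) : Measurable fun v => util M v k :=
  (Finset.measurable_sum _ fun j _ => (measurable_pi_apply j).mul_const _).sub measurable_const

def optimalRegion (k : Fin (K + 1)) : Set (Fin n → ℝ) := {w | ∀ k', util M w k' ≤ util M w k}

lemma price_eq_sup'_indicator (hp : ∀ k, 0 ≤ (M k).2) :
    price M = Finset.univ.sup' Finset.univ_nonempty
      (fun k => (optimalRegion M k).indicator fun _ => (M k).2) := by
  funext v
  rw [Finset.sup'_apply]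
  apply le_antisymm
  · obtain ⟨k, hk, hpk⟩ := exists_selected M v
    rw [← hpk, ← Set.indicator_of_mem (s := optimalRegion M k) hk (fun _ => (M k).2)]
    exact Finset.le_sup' (fun k => (optimalRegion M k).indicator (fun _ => (M k).2) v)
      (Finset.mem_univ k)
  · refine Finset.sup'_le _ _ fun k _ => ?_
    by_cases hk : v ∈ optimalRegion M k
    · rw [Set.indicator_of_mem hk]; exact le_price M v hk
    · rw [Set.indicator_of_notMem hk]; exact price_nonneg M v hp

lemma measurable_price (hp : ∀ k, 0 ≤ (M k).2) : Measurable (price M) := by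
  rw [price_eq_sup'_indicator M hp]
  refine Finset.measurable_sup' _ fun k _ => measurable_const.indicator ?_
  simp only [optimalRegion, Set.ofPred_forall]
  exact MeasurableSet.iInter fun k' =>
    measurableSet_le (measurable_util M k') (measurable_util M k)

lemma integrable_price (F : Measure (Fin n → ℝ)) [IsFiniteMeasure F] (hp : ∀ k, 0 ≤ (M k).2) :
    Integrable (price M) F :=
  .of_bound (measurable_price M hp).aestronglyMeasurable (∑ k, (M k).2) <| .of_forall fun v => by
    rw [Real.norm_eq_abs, abs_of_nonneg (price_nonneg M v hp)]
    exact price_le_sum M v hp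

end Price

lemma measurableSet_V (n : ℕ) : MeasurableSet (V n) := by
  unfold V; measurability

lemma rev_sub_le_rev {n K : ℕ} {F : Measure (Fin n → ℝ)} [IsProbabilityMeasure F]
    (hFV : F (V n) = 1) {M M' : Menu n K} (hp : ∀ k, 0 ≤ (M k).2) (hp' : ∀ k, 0 ≤ (M' k).2)
    {c : ℝ} (h : ∀ v ∈ V n, price M v - c ≤ price M' v) : Rev F M - c ≤ Rev F M' := by
  have hV : ∀ᵐ v ∂F, v ∈ V n := mem_ae_iff.2 ((prob_compl_eq_zero_iff (measurableSet_V n)).2 hFV)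
  have hint := integrable_price M F hp
  calc Rev F M - c = ∫ v, (price M v - c) ∂F := by
        rw [integral_sub hint (integrable_const c), integral_const, probReal_univ, one_smul, Rev]
    _ ≤ Rev F M' := integral_mono_ae (hint.sub (integrable_const c))
        (integrable_price M' F hp') (hV.mono h)

lemma sub_two_mul_le_price_of_perturb {n K : ℕ} {M M' : Menu n K} {v : Fin n → ℝ} {α s : ℝ}
    (hα : 0 ≤ α) (hαs : α ≤ s) (hs : s ≤ 1) (hp : ∀ k, (M' k).2 = (1 - α) * (M k).2)
    (hlow : ∀ k, dotp v (M k).1 - α * s ≤ dotp v (M' k).1)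
    (hup : ∀ k, dotp v (M' k).1 ≤ dotp v (M k).1) (hprice : price M v ≤ 1) :
    price M v - 2 * s ≤ price M' v := by
  obtain ⟨k₀, hk₀, hpk₀⟩ := exists_selected M v
  obtain ⟨k₁, hk₁⟩ := Finite.exists_max (util M' v)
  have hutil : ∀ k, util M v k + α * (M k).2 - α * s ≤ util M' v k ∧
      util M' v k ≤ util M v k + α * (M k).2 := fun k => by
    simp only [util, hp k]
    constructor <;> linarith [hlow k, hup k]
  rw [← hpk₀] at hprice ⊢
  rcases hα.eq_or_lt with rfl | hα
  · -- without perturbation `k₀` stays optimal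
    have hk₀' : ∀ k', util M' v k' ≤ util M' v k₀ := fun k' => by
      linarith [hutil k', hutil k₀, hk₀ k']
    have := le_price M' v hk₀'
    rw [hp k₀] at this
    linarith
  · have hchoice : α * ((M k₀).2 - s) ≤ α * (M k₁).2 := by
      linarith [hutil k₀, hutil k₁, hk₁ k₀, hk₀ k₁]
    have hk₁p : (M k₀).2 - s ≤ (M k₁).2 := le_of_mul_le_mul_left hchoice hα
    have := le_price M' v hk₁
    rw [hp k₁] at this
    nlinarith

section Discretize

variable {n K : ℕ} {εt lam : ℝ} (M : Menu n K)

lemma sub_le_mul_floor_div {x : ℝ} (hε : 0 < εt) : x - εt ≤ εt * ⌊x / εt⌋₊ := by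
  have := mul_lt_mul_of_pos_left (Nat.sub_one_lt_floor (x / εt)) hε
  rw [mul_sub, mul_div_cancel₀ _ hε.ne', mul_one] at this
  exact this.le

lemma mul_floor_div_le {x : ℝ} (hε : 0 < εt) (hx : 0 ≤ x) : εt * ⌊x / εt⌋₊ ≤ x := by
  have := mul_le_mul_of_nonneg_left (Nat.floor_le (div_nonneg hx hε.le)) hε.le
  rwa [mul_div_cancel₀ _ hε.ne'] at this

lemma comb_discretize_price (k : Fin (K + 1)) :
    (comb lam M (discretize εt M) k).2 = (1 - (1 - lam) * Real.sqrt εt) * (M k).2 := by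
  simp only [comb, discretize]; ring

lemma comb_discretize_alloc_le (hε : 0 < εt) (hlam : lam ≤ 1) (hM : IsMenu M) (k j) :
    (comb lam M (discretize εt M) k).1 j ≤ (M k).1 j := by
  have := mul_floor_div_le hε (hM.1 k j).1
  simp only [comb, discretize]
  nlinarith

lemma sub_le_comb_discretize_alloc (hε : 0 < εt) (hlam : lam ≤ 1) (k j) :
    (M k).1 j - (1 - lam) * εt ≤ (comb lam M (discretize εt M) k).1 j := by
  have := sub_le_mul_floor_div (x := (M k).1 j) hε
  simp only [comb, discretize]
  nlinarith

lemma price_sub_le_price_comb_discretize (hε0 : 0 < εt) (hε1 : εt ≤ 1) (hM : IsMenu M)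
    (hlam : lam ∈ Set.Icc (0 : ℝ) 1) {v : Fin n → ℝ} (hv : v ∈ V n) :
    price M v - 2 * Real.sqrt εt ≤ price (comb lam M (discretize εt M)) v := by
  have hs := Real.mul_self_sqrt hε0.le
  have hα : 0 ≤ 1 - lam := sub_nonneg.2 hlam.2
  refine sub_two_mul_le_price_of_perturb (α := (1 - lam) * Real.sqrt εt)
    (by positivity) (by nlinarith [hlam.1, Real.sqrt_nonneg εt]) (Real.sqrt_le_one.2 hε1)
    (comb_discretize_price M) (fun k => ?_) (fun k => ?_) (price_le_one M v hM hv)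
  · rw [mul_assoc, hs]
    exact dotp_sub_le_dotp v hv (by positivity) (sub_le_comb_discretize_alloc M hε0 hlam.2 k)
  · exact dotp_le_dotp v (fun j => (hv.1 j).1) (comb_discretize_alloc_le M hε0 hlam.2 hM k)

end Discretize

/-- For `εt ∈ (0,1]`, every convex combination of a menu `M` and its
discretization has revenue at least `Rev M - 2√εt`. -/
theorem statement8 {n K : ℕ} (F : Measure (Fin n → ℝ)) [IsProbabilityMeasure F]
    (hFV : F (V n) = 1) (εt : ℝ) (hε0 : 0 < εt) (hε1 : εt ≤ 1)
    (M : Menu n K) (hM : IsMenu M) :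
    ∀ lam ∈ Set.Icc (0 : ℝ) 1,
      Rev F (comb lam M (discretize εt M)) ≥ Rev F M - 2 * Real.sqrt εt := by
  intro lam hlam
  have hp' : ∀ k, 0 ≤ (comb lam M (discretize εt M) k).2 := fun k => by
    rw [comb_discretize_price]
    exact mul_nonneg (by nlinarith [hlam.1, hlam.2, Real.sqrt_le_one.2 hε1]) (hM.2.1 k)
  exact rev_sub_le_rev hFV hM.2.1 hp' fun v hv =>
    price_sub_le_price_comb_discretize M hε0 hε1 hM hlam hv

end RN
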